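/- Let $(F,G)$ be a pair of smooth compactly supported functions on a symplectic manifold. With $\rho_{F,G}$ the profile function, for every $\lambda \in (0,1)$ and $c > 0$ one has $\rho_{F,G}(\lambda c) \leq \rho_{F,G}(c) + 2\|F\|_\infty (1-\lambda)$. -/

import Mathlib

open Set

/-- The sup-norm (uniform norm) `‖f‖_∞ = sup_{x ∈ M} |f(x)|` of a function. -/
noncomputable def supNorm {M : Type*} (f : M → ℝ) : ℝ := ⨆ x, |f x|

/-- An abstract model of a symplectic manifold `M`, recording the predicate of being a
smooth function on `M` and the Poisson bracket `{·,·}` on smooth functions, together with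
its basic algebraic properties (ℝ-bilinearity, antisymmetry, and the Leibniz rule). -/
structure PoissonManifold (M : Type*) [TopologicalSpace M] where
  /-- `IsSmooth f` means `f ∈ C^∞(M)`. -/
  IsSmooth : (M → ℝ) → Prop
  /-- The Poisson bracket `{f, g}` associated to the symplectic form. -/
  bracket : (M → ℝ) → (M → ℝ) → M → ℝ
  isSmooth_continuous : ∀ {f}, IsSmooth f → Continuous f
  isSmooth_const : ∀ c : ℝ, IsSmooth (fun _ => c)
  isSmooth_add : ∀ {f g}, IsSmooth f → IsSmooth g → IsSmooth (f + g)
  isSmooth_mul : ∀ {f g}, IsSmooth f → IsSmooth g → IsSmooth (f * g)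
  isSmooth_smul : ∀ (c : ℝ) {f}, IsSmooth f → IsSmooth (c • f)
  isSmooth_bracket : ∀ {f g}, IsSmooth f → IsSmooth g → IsSmooth (bracket f g)
  bracket_add_left : ∀ f g h, bracket (f + g) h = bracket f h + bracket g h
  bracket_smul_left : ∀ (c : ℝ) f g, bracket (c • f) g = c • bracket f g
  bracket_antisymm : ∀ f g, bracket f g = - bracket g f
  bracket_leibniz : ∀ f g h, bracket (f * g) h = f * bracket g h + g * bracket f h

/-- The set `𝒦_s` of pairs of smooth compactly supported functions `(H,K)` with
`‖{H,K}‖_∞ ≤ s`, as a predicate. -/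
def inKs {M : Type*} [TopologicalSpace M] (P : PoissonManifold M) (s : ℝ)
    (H K : M → ℝ) : Prop :=
  P.IsSmooth H ∧ HasCompactSupport H ∧ P.IsSmooth K ∧ HasCompactSupport K ∧
    supNorm (P.bracket H K) ≤ s

/-- The profile function `ρ_{F,G}(s) = dist((F,G), 𝒦_s)` in the uniform distance
`d((F,G),(H,K)) = ‖F-H‖_∞ + ‖G-K‖_∞`. -/
noncomputable def profileFn {M : Type*} [TopologicalSpace M] (P : PoissonManifold M)
    (F G : M → ℝ) (s : ℝ) : ℝ :=
  sInf {d : ℝ | ∃ H K : M → ℝ, inKs P s H K ∧ d = supNorm (F - H) + supNorm (G - K)}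

section SupNorm

variable {M : Type*}

lemma supNorm_nonneg (f : M → ℝ) : 0 ≤ supNorm f :=
  Real.iSup_nonneg fun _ => abs_nonneg _

lemma abs_le_supNorm {f : M → ℝ} (hf : BddAbove (range fun x => |f x|)) (x : M) :
    |f x| ≤ supNorm f :=
  le_ciSup hf x

lemma supNorm_zero : supNorm (0 : M → ℝ) = 0 := by
  simp [supNorm]

lemma supNorm_smul (a : ℝ) (f : M → ℝ) : supNorm (a • f) = |a| * supNorm f := by
  simp only [supNorm, Real.mul_iSup_of_nonneg (abs_nonneg a), Pi.smul_apply, smul_eq_mul,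
    abs_mul]

lemma supNorm_add_le {f g : M → ℝ} (hf : BddAbove (range fun x => |f x|))
    (hg : BddAbove (range fun x => |g x|)) : supNorm (f + g) ≤ supNorm f + supNorm g :=
  Real.iSup_le (fun x => (abs_add_le (f x) (g x)).trans
    (add_le_add (abs_le_supNorm hf x) (abs_le_supNorm hg x)))
    (add_nonneg (supNorm_nonneg f) (supNorm_nonneg g))

lemma supNorm_sub_le {f g : M → ℝ} (hf : BddAbove (range fun x => |f x|))
    (hg : BddAbove (range fun x => |g x|)) : supNorm (f - g) ≤ supNorm f + supNorm g :=
  Real.iSup_le (fun x => (abs_sub (f x) (g x)).trans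
    (add_le_add (abs_le_supNorm hf x) (abs_le_supNorm hg x)))
    (add_nonneg (supNorm_nonneg f) (supNorm_nonneg g))

lemma bddAbove_range_abs_of_hasCompactSupport [TopologicalSpace M] {f : M → ℝ}
    (hf : Continuous f) (hfc : HasCompactSupport f) : BddAbove (range fun x => |f x|) :=
  hf.abs.bddAbove_range_of_hasCompactSupport hfc.abs

end SupNorm

section Profile

variable {M : Type*} [TopologicalSpace M] (P : PoissonManifold M)

lemma PoissonManifold.bracket_zero_left (K : M → ℝ) : P.bracket 0 K = 0 := by
  simpa using P.bracket_smul_left 0 0 K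

lemma PoissonManifold.isSmooth_zero : P.IsSmooth 0 :=
  P.isSmooth_const 0

variable {P}

lemma inKs_zero_left {s : ℝ} (hs : 0 ≤ s) {K : M → ℝ} (hK : P.IsSmooth K)
    (hKc : HasCompactSupport K) : inKs P s 0 K :=
  ⟨P.isSmooth_zero, .zero, hK, hKc, by rwa [P.bracket_zero_left, supNorm_zero]⟩

lemma inKs.smul_left {s a : ℝ} {H K : M → ℝ} (h : inKs P s H K) (ha : 0 ≤ a) :
    inKs P (a * s) (a • H) K := by
  obtain ⟨hH, hHc, hK, hKc, hbr⟩ := h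
  refine ⟨P.isSmooth_smul a hH, hHc.smul_left, hK, hKc, ?_⟩
  rw [P.bracket_smul_left, supNorm_smul, abs_of_nonneg ha]
  exact mul_le_mul_of_nonneg_left hbr ha

lemma profileFn_le {s : ℝ} {F G H K : M → ℝ} (h : inKs P s H K) :
    profileFn P F G s ≤ supNorm (F - H) + supNorm (G - K) :=
  csInf_le ⟨0, by
    rintro d ⟨H, K, -, rfl⟩
    exact add_nonneg (supNorm_nonneg _) (supNorm_nonneg _)⟩ ⟨H, K, h, rfl⟩

lemma profileFn_le_add {s t T : ℝ} {F G : M → ℝ} (hne : ∃ H K, inKs P s H K)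
    (h : ∀ H K, inKs P s H K → profileFn P F G t ≤ supNorm (F - H) + supNorm (G - K) + T) :
    profileFn P F G t ≤ profileFn P F G s + T := by
  obtain ⟨H₀, K₀, h₀⟩ := hne
  rw [← sub_le_iff_le_add]
  refine le_csInf ⟨_, H₀, K₀, h₀, rfl⟩ ?_
  rintro d ⟨H, K, hHK, rfl⟩
  exact sub_le_iff_le_add.2 (h H K hHK)

/-- Shrinking `H` to `λ H` moves it by at most `(1 - λ) ‖H‖ ≤ (1 - λ)(‖F‖ + ‖F - H‖)`,
which is `≤ 2 (1 - λ) ‖F‖` unless `‖F - H‖ > ‖F‖`; in that case `(0, K)` is already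
closer to `(F, G)`. -/
lemma profileFn_mul_le_of_inKs {F G H K : M → ℝ} (hF : P.IsSmooth F)
    (hFc : HasCompactSupport F) {lam c : ℝ} (hlam : lam ∈ Icc (0 : ℝ) 1) (hc : 0 ≤ c)
    (hHK : inKs P c H K) :
    profileFn P F G (lam * c) ≤
      supNorm (F - H) + supNorm (G - K) + 2 * supNorm F * (1 - lam) := by
  obtain ⟨hlam0, hlam1⟩ := hlam
  have ⟨hH, hHc, hK, hKc, _⟩ := hHK
  have hT : 0 ≤ 2 * supNorm F * (1 - lam) :=
    mul_nonneg (mul_nonneg zero_le_two (supNorm_nonneg F)) (sub_nonneg.2 hlam1)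
  rcases lt_or_ge (supNorm F) (supNorm (F - H)) with hfar | hnear
  · have hzero := profileFn_le (F := F) (G := G) (inKs_zero_left (mul_nonneg hlam0 hc) hK hKc)
    rw [sub_zero] at hzero
    linarith
  have hFcont := P.isSmooth_continuous hF
  have hHcont := P.isSmooth_continuous hH
  have hFb := bddAbove_range_abs_of_hasCompactSupport hFcont hFc
  have hFHb := bddAbove_range_abs_of_hasCompactSupport (hFcont.sub hHcont) (hFc.sub hHc)
  have hHle : supNorm H ≤ 2 * supNorm F := calc
    supNorm H = supNorm (F - (F - H)) := by rw [sub_sub_cancel]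
    _ ≤ supNorm F + supNorm (F - H) := supNorm_sub_le hFb hFHb
    _ ≤ 2 * supNorm F := by linarith
  have hscaled : supNorm (F - lam • H) ≤ supNorm (F - H) + 2 * supNorm F * (1 - lam) := calc
    supNorm (F - lam • H) = supNorm ((F - H) + (1 - lam) • H) := by congr 1; module
    _ ≤ supNorm (F - H) + supNorm ((1 - lam) • H) := supNorm_add_le hFHb
      (bddAbove_range_abs_of_hasCompactSupport (hHcont.const_smul _) hHc.smul_left)
    _ = supNorm (F - H) + (1 - lam) * supNorm H := by
      rw [supNorm_smul, abs_of_nonneg (sub_nonneg.2 hlam1)]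
    _ ≤ supNorm (F - H) + 2 * supNorm F * (1 - lam) := by nlinarith
  linarith [profileFn_le (F := F) (G := G) (hHK.smul_left hlam0)]

end Profile

theorem profile_rescaling_estimate_general
    {M : Type*} [TopologicalSpace M] (P : PoissonManifold M)
    (F G : M → ℝ) (hF : P.IsSmooth F) (hFc : HasCompactSupport F)
    (lam c : ℝ) (hlam : lam ∈ Ioo (0:ℝ) 1) (hc : 0 < c) :
    profileFn P F G (lam * c) ≤ profileFn P F G c + 2 * supNorm F * (1 - lam) := by
  exact profileFn_le_add ⟨0, 0, inKs_zero_left hc.le P.isSmooth_zero .zero⟩ fun H K hHK =>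
    profileFn_mul_le_of_inKs hF hFc (Ioo_subset_Icc_self hlam) hc.le hHK

/-- For smooth compactly supported `F, G`, every `λ ∈ (0,1)` and `c > 0`:
`ρ_{F,G}(λc) ≤ ρ_{F,G}(c) + 2‖F‖_∞(1-λ)`. -/
theorem profile_rescaling_estimate
    {M : Type*} [TopologicalSpace M] (P : PoissonManifold M)
    (F G : M → ℝ) (hF : P.IsSmooth F) (hFc : HasCompactSupport F)
    (hG : P.IsSmooth G) (hGc : HasCompactSupport G)
    (lam c : ℝ) (hlam : lam ∈ Ioo (0:ℝ) 1) (hc : 0 < c) :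
    profileFn P F G (lam * c) ≤ profileFn P F G c + 2 * supNorm F * (1 - lam) :=
  profile_rescaling_estimate_general P F G hF hFc lam c hlam hc
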